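/- arXiv:2602.06045 — 3 statements merged into one kernel-verified Lean document; each statement's English description precedes it below -/
import Mathlib

section
/- Let p and p1 be primes, n and n1 positive integers, let A be a circular quasi-Florentine rectangle of size p^n × (p^n − 1) over Z_{p^n}, let 1 ≤ c < p1^{n1} − 1, and let B be a generalized quasi-Florentine rectangle of size p1^{n1} × (p1^{n1} − c) over Z_{p1^{n1}}. Then the matrix D of Construction 1 (applied to A over Z_{p^n} and B over Z_{p1^{n1}}) is a generalized quasi-Florentine rectangle of size min{p^n, p1^{n1}} × (p^n − 1)(p1^{n1} − c) over Z_{p^n p1^{n1}}. -/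
/-- Generalized quasi-Florentine rectangle of size `s × n` over `ZMod N`:
each row has pairwise distinct entries (C1), and for every ordered pair of
distinct symbols and every step `m` with `1 ≤ m < n`, at most one row contains
the pair at distance `m` (C2). -/
def IsGQFR (N s n : ℕ) (A : ℕ → ℕ → ZMod N) : Prop :=
  (∀ i < s, ∀ j < n, ∀ k < n, A i j = A i k → j = k) ∧
  (∀ a b : ZMod N, a ≠ b → ∀ m : ℕ, 1 ≤ m → m < n →
    ∀ i < s, ∀ p < s,
      (∃ j, j + m < n ∧ A i j = a ∧ A i (j + m) = b) →
      (∃ j, j + m < n ∧ A p j = a ∧ A p (j + m) = b) → i = p)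

/-- Generalized circular quasi-Florentine rectangle: C1 together with the
circular version of C2 (steps counted cyclically modulo the row length `n`). -/
def IsGCQFR (N s n : ℕ) (A : ℕ → ℕ → ZMod N) : Prop :=
  (∀ i < s, ∀ j < n, ∀ k < n, A i j = A i k → j = k) ∧
  (∀ a b : ZMod N, a ≠ b → ∀ m : ℕ, 1 ≤ m → m < n →
    ∀ i < s, ∀ p < s,
      (∃ j < n, A i j = a ∧ A i ((j + m) % n) = b) →
      (∃ j < n, A p j = a ∧ A p ((j + m) % n) = b) → i = p)

/-- Construction 1: from an `s × n` matrix `A` over `ZMod N1` and a `t × m`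
matrix `B` over `ZMod N2`, form the matrix with entries
`d_{i,j} = a_{i, j mod n} + N1 * b_{i, ⌊j/n⌋}` in `ZMod (N1 * N2)`. -/
def construct1 (N1 N2 n : ℕ) (A : ℕ → ℕ → ZMod N1) (B : ℕ → ℕ → ZMod N2) :
    ℕ → ℕ → ZMod (N1 * N2) :=
  fun i j => (((A i (j % n)).val + N1 * (B i (j / n)).val : ℕ) : ZMod (N1 * N2))

lemma decomp_eq {N1 N2 : ℕ} [NeZero N1] [NeZero N2] {x x' : ZMod N1} {y y' : ZMod N2}
    (h : ((x.val + N1 * y.val : ℕ) : ZMod (N1 * N2)) = ((x'.val + N1 * y'.val : ℕ) : ZMod (N1 * N2))) :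
    x = x' ∧ y = y' := by
  haveI : NeZero (N1 * N2) := ⟨Nat.mul_ne_zero (NeZero.ne N1) (NeZero.ne N2)⟩
  have hN1 : 0 < N1 := Nat.pos_of_ne_zero (NeZero.ne N1)
  have hb : ∀ (u : ZMod N1) (v : ZMod N2), u.val + N1 * v.val < N1 * N2 := by
    intro u v
    have h1 : u.val < N1 := u.val_lt
    have h2 : v.val + 1 ≤ N2 := v.val_lt
    calc u.val + N1 * v.val < N1 + N1 * v.val := by omega
      _ = N1 * (v.val + 1) := by ring
      _ ≤ N1 * N2 := Nat.mul_le_mul_left _ h2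
  have hnat : x.val + N1 * y.val = x'.val + N1 * y'.val := by
    have := congrArg ZMod.val h
    rwa [ZMod.val_cast_of_lt (hb x y), ZMod.val_cast_of_lt (hb x' y')] at this
  have hx : x.val = x'.val := by
    have := congrArg (· % N1) hnat
    simpa [Nat.add_mul_mod_self_left, Nat.mod_eq_of_lt x.val_lt, Nat.mod_eq_of_lt x'.val_lt] using this
  have hy : y.val = y'.val := by
    have h3 : N1 * y.val = N1 * y'.val := by omega
    exact Nat.eq_of_mul_eq_mul_left hN1 h3
  exact ⟨ZMod.val_injective _ hx, ZMod.val_injective _ hy⟩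


/-- Corollary, part ii: Construction 1 applied to a circular
quasi-Florentine rectangle of size `p^n × (p^n - 1)` over `ZMod (p^n)` and a
generalized quasi-Florentine rectangle of size `p1^n1 × (p1^n1 - c)` over
`ZMod (p1^n1)` (`1 ≤ c < p1^n1 - 1`) yields a generalized quasi-Florentine
rectangle of size `min{p^n, p1^n1} × (p^n - 1)(p1^n1 - c)` over
`ZMod (p^n * p1^n1)`. -/
theorem stmt6 (p p1 n n1 c : ℕ) (hp : p.Prime) (hp1 : p1.Prime)
    (hn : 0 < n) (hn1 : 0 < n1) (hc1 : 1 ≤ c) (hc2 : c < p1 ^ n1 - 1)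
    (A : ℕ → ℕ → ZMod (p ^ n)) (hA : IsGCQFR (p ^ n) (p ^ n) (p ^ n - 1) A)
    (B : ℕ → ℕ → ZMod (p1 ^ n1))
    (hB : IsGQFR (p1 ^ n1) (p1 ^ n1) (p1 ^ n1 - c) B) :
    IsGQFR (p ^ n * p1 ^ n1) (min (p ^ n) (p1 ^ n1)) ((p ^ n - 1) * (p1 ^ n1 - c))
      (construct1 (p ^ n) (p1 ^ n1) (p ^ n - 1) A B) := by
  obtain ⟨hA1, hA2⟩ := hA
  obtain ⟨hB1, hB2⟩ := hB
  have h2N1 : 2 ≤ p ^ n := le_trans hp.two_le (Nat.le_self_pow hn.ne' p)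
  have h2N2 : 2 ≤ p1 ^ n1 := le_trans hp1.two_le (Nat.le_self_pow hn1.ne' p1)
  haveI : NeZero (p ^ n) := ⟨by omega⟩
  haveI : NeZero (p1 ^ n1) := ⟨by omega⟩
  have hnA : 0 < p ^ n - 1 := by omega
  have hnB : 0 < p1 ^ n1 - c := by omega
  constructor
  · -- C1
    intro i hi j hj k hk hjk
    have hiA : i < p ^ n := lt_of_lt_of_le hi (min_le_left _ _)
    have hiB : i < p1 ^ n1 := lt_of_lt_of_le hi (min_le_right _ _)
    simp only [construct1] at hjk
    obtain ⟨e1, e2⟩ := decomp_eq hjk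
    have hjd : j / (p ^ n - 1) < p1 ^ n1 - c :=
      (Nat.div_lt_iff_lt_mul hnA).mpr (by rw [mul_comm] at hj; exact hj)
    have hkd : k / (p ^ n - 1) < p1 ^ n1 - c :=
      (Nat.div_lt_iff_lt_mul hnA).mpr (by rw [mul_comm] at hk; exact hk)
    have e3 : j % (p ^ n - 1) = k % (p ^ n - 1) :=
      hA1 i hiA _ (Nat.mod_lt _ hnA) _ (Nat.mod_lt _ hnA) e1
    have e4 : j / (p ^ n - 1) = k / (p ^ n - 1) := hB1 i hiB _ hjd _ hkd e2
    calc j = j % (p ^ n - 1) + (p ^ n - 1) * (j / (p ^ n - 1)) := (Nat.mod_add_div j _).symm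
      _ = k % (p ^ n - 1) + (p ^ n - 1) * (k / (p ^ n - 1)) := by rw [e3, e4]
      _ = k := Nat.mod_add_div k _
  · -- C2
    intro a b hab m hm1 hm2 i hi q hq hwi hwq
    obtain ⟨j, hjm, hja, hjb⟩ := hwi
    obtain ⟨j', hjm', hja', hjb'⟩ := hwq
    have hiA : i < p ^ n := lt_of_lt_of_le hi (min_le_left _ _)
    have hiB : i < p1 ^ n1 := lt_of_lt_of_le hi (min_le_right _ _)
    have hqA : q < p ^ n := lt_of_lt_of_le hq (min_le_left _ _)
    have hqB : q < p1 ^ n1 := lt_of_lt_of_le hq (min_le_right _ _)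
    simp only [construct1] at hja hjb hja' hjb'
    obtain ⟨ea1, ea2⟩ := decomp_eq (hja.trans hja'.symm)
    obtain ⟨eb1, eb2⟩ := decomp_eq (hjb.trans hjb'.symm)
    -- div bounds
    have hd1 : (j + m) / (p ^ n - 1) < p1 ^ n1 - c :=
      (Nat.div_lt_iff_lt_mul hnA).mpr (by rw [mul_comm] at hjm; exact hjm)
    have hd1' : (j' + m) / (p ^ n - 1) < p1 ^ n1 - c :=
      (Nat.div_lt_iff_lt_mul hnA).mpr (by rw [mul_comm] at hjm'; exact hjm')
    by_cases h1 : A i (j % (p ^ n - 1)) = A i ((j + m) % (p ^ n - 1))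
    · -- A-components equal: step is a multiple of p^n - 1; use B
      have hmod : (j + m) % (p ^ n - 1) = j % (p ^ n - 1) :=
        (hA1 i hiA _ (Nat.mod_lt _ hnA) _ (Nat.mod_lt _ hnA) h1).symm
      have hdvd : (p ^ n - 1) ∣ m := by
        have hme : (j : ℕ) ≡ j + m [MOD (p ^ n - 1)] := (Nat.ModEq.symm hmod)
        have := (Nat.modEq_iff_dvd' (Nat.le_add_right j m)).mp hme
        simpa using this
      obtain ⟨t, ht⟩ := hdvd
      have ht1 : 1 ≤ t := by
        rcases Nat.eq_zero_or_pos t with h | h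
        · exfalso; rw [h, Nat.mul_zero] at ht; omega
        · exact h
      have hjdiv : (j + m) / (p ^ n - 1) = j / (p ^ n - 1) + t := by
        rw [ht, Nat.add_mul_div_left _ _ hnA]
      have hjdiv' : (j' + m) / (p ^ n - 1) = j' / (p ^ n - 1) + t := by
        rw [ht, Nat.add_mul_div_left _ _ hnA]
      have htlt : t < p1 ^ n1 - c := by
        have h5 : (p ^ n - 1) * t < (p ^ n - 1) * (p1 ^ n1 - c) :=
          lt_of_le_of_lt (by omega) hjm
        exact Nat.lt_of_mul_lt_mul_left h5
      have hne2 : B i (j / (p ^ n - 1)) ≠ B i ((j + m) / (p ^ n - 1)) := by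
        intro h2
        apply hab
        rw [← hja, ← hjb, h1, h2]
      exact hB2 (B i (j / (p ^ n - 1))) (B i ((j + m) / (p ^ n - 1))) hne2 t ht1 htlt
        i hiB q hqB
        ⟨j / (p ^ n - 1), by rw [← hjdiv]; exact hd1, rfl, by rw [← hjdiv]⟩
        ⟨j' / (p ^ n - 1), by rw [← hjdiv']; exact hd1', ea2.symm, by rw [← hjdiv']; exact eb2.symm⟩
    · -- A-components differ: use circular property of A with step m % (p^n - 1)
      have hr1 : 1 ≤ m % (p ^ n - 1) := by
        rcases Nat.eq_zero_or_pos (m % (p ^ n - 1)) with h0 | h0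
        · exfalso; apply h1
          have h6 : (j + m) % (p ^ n - 1) = j % (p ^ n - 1) := by
            rw [Nat.add_mod, h0, Nat.add_zero, Nat.mod_mod_of_dvd _ dvd_rfl]
          rw [h6]
        · exact h0
      have hrlt : m % (p ^ n - 1) < p ^ n - 1 := Nat.mod_lt _ hnA
      refine hA2 (A i (j % (p ^ n - 1))) (A i ((j + m) % (p ^ n - 1))) h1
        (m % (p ^ n - 1)) hr1 hrlt i hiA q hqA
        ⟨j % (p ^ n - 1), Nat.mod_lt _ hnA, rfl, by rw [← Nat.add_mod]⟩
        ⟨j' % (p ^ n - 1), Nat.mod_lt _ hnA, ea1.symm, by rw [← Nat.add_mod]; exact eb1.symm⟩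
end

section
/- Let p be a prime, n a positive integer, N1 a positive integer with smallest prime factor p1, and 1 ≤ c < p^n − 1. Let A be a generalized quasi-Florentine rectangle of size K × L over Z_N with K = min{p1 − 1, p^n}, L = N1(p^n − c) and N = N1 p^n, and let B be a Butson-type Hadamard matrix BH(N, r). Then the set C of Construction 2 is an aperiodic (K, N1 p^n, N1(p^n − c), N1 p^n, Π)-DRCS set with Π = (−N1(p^n − c), N1(p^n − c)) × (−N1(p^n − c), N1(p^n − c)); that is, θ̂_max(C) ≤ N1 p^n. -/
/-- Aperiodic cross-ambiguity function of two length-`L` sequences at integer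
delay `τ` and integer Doppler `ν`. -/
noncomputable def apAF (L : ℕ) (a b : ℕ → ℂ) (τ ν : ℤ) : ℂ :=
  if 0 ≤ τ then
    ∑ t ∈ Finset.range (L - τ.toNat),
      a t * (starRingEnd ℂ) (b (t + τ.toNat)) *
        Complex.exp (2 * (Real.pi : ℂ) * Complex.I * ((ν * t : ℤ) : ℂ) / (L : ℂ))
  else
    ∑ t ∈ Finset.range (L - (-τ).toNat),
      a (t + (-τ).toNat) * (starRingEnd ℂ) (b t) *
        Complex.exp (2 * (Real.pi : ℂ) * Complex.I *
          ((ν * (t + (-τ).toNat) : ℤ) : ℂ) / (L : ℂ))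

/-- Butson-type Hadamard matrix `BH(N, r)` given by its exponent matrix `b`:
the matrix `(ω_r^{b_{i,j}})` satisfies `B Bᴴ = N I`. -/
def IsBH (N r : ℕ) (b : ℕ → ℕ → ℤ) : Prop :=
  ∀ i < N, ∀ j < N,
    (∑ k ∈ Finset.range N,
        Complex.exp (2 * (Real.pi : ℂ) * Complex.I * ((b i k - b j k : ℤ) : ℂ) / (r : ℂ)))
      = if i = j then (N : ℂ) else 0

/-- Construction 2: the sequence `c_m^{(k)}` of length `L`, with
`c_m^{(k)}(n) = ω_r^{b_{a_{k,n}, m}}`. -/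
noncomputable def seqC (N r : ℕ) (A : ℕ → ℕ → ZMod N) (b : ℕ → ℕ → ℤ) (k m : ℕ) :
    ℕ → ℂ :=
  fun n => Complex.exp (2 * (Real.pi : ℂ) * Complex.I *
    ((b (A k n).val m : ℤ) : ℂ) / (r : ℂ))

/-- Ambiguity-function sum of the DRCSs `C^{(k1)}` and `C^{(k2)}` of
Construction 2: `AF_{C^{(k1)},C^{(k2)}}(τ,ν) = Σ_{m<N} AF_{c_m^{(k1)},c_m^{(k2)}}(τ,ν)`. -/
noncomputable def AFsum (L N r : ℕ) (A : ℕ → ℕ → ZMod N) (b : ℕ → ℕ → ℤ)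
    (k1 k2 : ℕ) (τ ν : ℤ) : ℂ :=
  ∑ m ∈ Finset.range N, apAF L (seqC N r A b k1 m) (seqC N r A b k2 m) τ ν

lemma phase_abs (L : ℕ) (m : ℤ) :
    ‖Complex.exp (2 * (Real.pi : ℂ) * Complex.I * ((m : ℤ) : ℂ) / (L : ℂ))‖ = 1 := by
  have h : 2 * (Real.pi : ℂ) * Complex.I * ((m : ℤ) : ℂ) / (L : ℂ)
      = ((2 * Real.pi * (m : ℝ) / (L : ℝ) : ℝ) : ℂ) * Complex.I := by
    push_cast; ring
  rw [h, Complex.norm_exp_ofReal_mul_I]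

lemma sumBH {N r : ℕ} (hN : 0 < N) {b : ℕ → ℕ → ℤ} (hB : IsBH N r b)
    (A : ℕ → ℕ → ZMod N) (k1 k2 t1 t2 : ℕ) :
    ∑ m ∈ Finset.range N, seqC N r A b k1 m t1 * (starRingEnd ℂ) (seqC N r A b k2 m t2)
      = if A k1 t1 = A k2 t2 then (N : ℂ) else 0 := by
  haveI : NeZero N := ⟨hN.ne'⟩
  have key := hB (A k1 t1).val (ZMod.val_lt _) (A k2 t2).val (ZMod.val_lt _)
  have hterm : ∀ m, seqC N r A b k1 m t1 * (starRingEnd ℂ) (seqC N r A b k2 m t2)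
      = Complex.exp (2 * (Real.pi : ℂ) * Complex.I *
          ((b (A k1 t1).val m - b (A k2 t2).val m : ℤ) : ℂ) / (r : ℂ)) := by
    intro m
    unfold seqC
    rw [← Complex.exp_conj, ← Complex.exp_add]
    congr 1
    have : (starRingEnd ℂ) (2 * (Real.pi : ℂ) * Complex.I *
        ((b (A k2 t2).val m : ℤ) : ℂ) / (r : ℂ))
        = -(2 * (Real.pi : ℂ) * Complex.I * ((b (A k2 t2).val m : ℤ) : ℂ) / (r : ℂ)) := by
      simp [map_div₀, Complex.conj_I, map_ofNat]
      ring
    rw [this]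
    push_cast
    ring
  simp_rw [hterm]
  rw [key]
  congr 1
  simp only [eq_iff_iff]
  constructor
  · exact fun h => ZMod.val_injective N h
  · exact fun h => congrArg ZMod.val h

lemma AFsum_pos {L N r : ℕ} (hN : 0 < N) {b : ℕ → ℕ → ℤ} (hB : IsBH N r b)
    (A : ℕ → ℕ → ZMod N) (k1 k2 : ℕ) (τ ν : ℤ) (hτ : 0 ≤ τ) :
    AFsum L N r A b k1 k2 τ ν
      = (N : ℂ) * ∑ t ∈ (Finset.range (L - τ.toNat)).filter
            (fun t => A k1 t = A k2 (t + τ.toNat)),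
          Complex.exp (2 * (Real.pi : ℂ) * Complex.I * ((ν * t : ℤ) : ℂ) / (L : ℂ)) := by
  unfold AFsum apAF
  simp only [if_pos hτ]
  rw [Finset.sum_comm]
  have hinner : ∀ t ∈ Finset.range (L - τ.toNat),
      (∑ m ∈ Finset.range N, seqC N r A b k1 m t *
          (starRingEnd ℂ) (seqC N r A b k2 m (t + τ.toNat)) *
          Complex.exp (2 * (Real.pi : ℂ) * Complex.I * ((ν * t : ℤ) : ℂ) / (L : ℂ)))
        = (if A k1 t = A k2 (t + τ.toNat) then (N : ℂ) else 0) *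
            Complex.exp (2 * (Real.pi : ℂ) * Complex.I * ((ν * t : ℤ) : ℂ) / (L : ℂ)) := by
    intro t _
    rw [← Finset.sum_mul, sumBH hN hB A k1 k2 t (t + τ.toNat)]
  rw [Finset.sum_congr rfl hinner]
  simp_rw [ite_mul, zero_mul, ← Finset.sum_filter, Finset.mul_sum]

lemma AFsum_neg {L N r : ℕ} (hN : 0 < N) {b : ℕ → ℕ → ℤ} (hB : IsBH N r b)
    (A : ℕ → ℕ → ZMod N) (k1 k2 : ℕ) (τ ν : ℤ) (hτ : ¬ 0 ≤ τ) :
    AFsum L N r A b k1 k2 τ ν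
      = (N : ℂ) * ∑ t ∈ (Finset.range (L - (-τ).toNat)).filter
            (fun t => A k1 (t + (-τ).toNat) = A k2 t),
          Complex.exp (2 * (Real.pi : ℂ) * Complex.I *
            ((ν * (t + (-τ).toNat) : ℤ) : ℂ) / (L : ℂ)) := by
  unfold AFsum apAF
  simp only [if_neg hτ]
  rw [Finset.sum_comm]
  have hinner : ∀ t ∈ Finset.range (L - (-τ).toNat),
      (∑ m ∈ Finset.range N, seqC N r A b k1 m (t + (-τ).toNat) *
          (starRingEnd ℂ) (seqC N r A b k2 m t) *
          Complex.exp (2 * (Real.pi : ℂ) * Complex.I *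
            ((ν * (t + (-τ).toNat) : ℤ) : ℂ) / (L : ℂ)))
        = (if A k1 (t + (-τ).toNat) = A k2 t then (N : ℂ) else 0) *
            Complex.exp (2 * (Real.pi : ℂ) * Complex.I *
              ((ν * (t + (-τ).toNat) : ℤ) : ℂ) / (L : ℂ)) := by
    intro t _
    rw [← Finset.sum_mul, sumBH hN hB A k1 k2 (t + (-τ).toNat) t]
  rw [Finset.sum_congr rfl hinner]
  simp_rw [ite_mul, zero_mul, ← Finset.sum_filter, Finset.mul_sum]

lemma geom_zero (L : ℕ) (ν : ℤ) (hL : 0 < L) (hν : ν ≠ 0) (hν2 : |ν| < (L : ℤ)) :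
    ∑ t ∈ Finset.range L,
        Complex.exp (2 * (Real.pi : ℂ) * Complex.I * ((ν * t : ℤ) : ℂ) / (L : ℂ)) = 0 := by
  have hL0 : (L : ℂ) ≠ 0 := Nat.cast_ne_zero.mpr hL.ne'
  have harg : ∀ t : ℕ, 2 * (Real.pi : ℂ) * Complex.I * ((ν * t : ℤ) : ℂ) / (L : ℂ)
      = (t : ℕ) * (2 * (Real.pi : ℂ) * Complex.I * (ν : ℂ) / (L : ℂ)) := by
    intro t; push_cast; ring
  simp_rw [harg, Complex.exp_nat_mul]
  set x := Complex.exp (2 * (Real.pi : ℂ) * Complex.I * (ν : ℂ) / (L : ℂ)) with hx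
  have hx1 : x ≠ 1 := by
    rw [hx, Ne, Complex.exp_eq_one_iff]
    push_neg
    intro m hm
    have h2 : (2 * (Real.pi : ℂ) * Complex.I) ≠ 0 := by
      simp [Real.pi_ne_zero, Complex.I_ne_zero]
    have hνm : (ν : ℂ) = (m : ℂ) * (L : ℂ) := by
      field_simp at hm
      have := hm
      apply mul_left_cancel₀ h2
      linear_combination (2 * (Real.pi : ℂ) * Complex.I) * hm
    have : ν = m * L := by exact_mod_cast hνm
    rcases eq_or_ne m 0 with h0 | h0
    · exact hν (by simp [this, h0])
    · have : (L : ℤ) ≤ |ν| := by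
        rw [this, abs_mul]
        have h1 : (1 : ℤ) ≤ |m| := Int.one_le_abs h0
        have : |(L : ℤ)| = (L : ℤ) := abs_of_nonneg (by positivity)
        nlinarith [abs_nonneg (m : ℤ), abs_nonneg ((L : ℤ))]
      omega
  rw [geom_sum_eq hx1]
  have hxL : x ^ L = 1 := by
    rw [hx, ← Complex.exp_nat_mul]
    have : (L : ℂ) * (2 * (Real.pi : ℂ) * Complex.I * (ν : ℂ) / (L : ℂ))
        = (ν : ℂ) * (2 * (Real.pi : ℂ) * Complex.I) := by
      field_simp
    rw [this, Complex.exp_int_mul_two_pi_mul_I]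
  simp [hxL]

lemma self_filter_empty {N K L : ℕ} {A : ℕ → ℕ → ZMod N} (hA : IsGQFR N K L A)
    {k : ℕ} (hk : k < K) {σ : ℕ} (hσ : 1 ≤ σ) :
    (Finset.range (L - σ)).filter (fun t => A k t = A k (t + σ)) = ∅ := by
  rw [Finset.eq_empty_iff_forall_notMem]
  intro t ht
  rw [Finset.mem_filter, Finset.mem_range] at ht
  obtain ⟨ht1, ht2⟩ := ht
  have := hA.1 k hk t (by omega) (t + σ) (by omega) ht2
  omega

lemma cross_filter_card {N K L : ℕ} {A : ℕ → ℕ → ZMod N} (hA : IsGQFR N K L A)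
    {k1 k2 : ℕ} (hk1 : k1 < K) (hk2 : k2 < K) (hne : k1 ≠ k2) (σ : ℕ) :
    ((Finset.range (L - σ)).filter (fun t => A k1 t = A k2 (t + σ))).card ≤ 1 := by
  set S := (Finset.range (L - σ)).filter (fun t => A k1 t = A k2 (t + σ)) with hS
  have key : ∀ t1 ∈ S, ∀ t2 ∈ S, t1 < t2 → False := by
    intro t1 h1 t2 h2 hlt
    rw [hS, Finset.mem_filter, Finset.mem_range] at h1 h2
    obtain ⟨hr1, he1⟩ := h1
    obtain ⟨hr2, he2⟩ := h2
    set m := t2 - t1 with hm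
    have hab : A k1 t1 ≠ A k1 t2 := by
      intro h
      have := hA.1 k1 hk1 t1 (by omega) t2 (by omega) h
      omega
    have e1 : t1 + m = t2 := by omega
    have e2 : (t1 + σ) + m = t2 + σ := by omega
    have := hA.2 (A k1 t1) (A k1 t2) hab m (by omega) (by omega) k1 hk1 k2 hk2
      ⟨t1, by omega, rfl, by rw [e1]⟩
      ⟨t1 + σ, by omega, he1.symm, by rw [e2, ← he2]⟩
    exact hne this
  rw [Finset.card_le_one]
  intro a ha b hb
  by_contra h
  rcases Nat.lt_or_ge a b with hlt | hge
  · exact key a ha b hb hlt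
  · exact key b hb a ha (by omega)

lemma abs_bound (Nn L : ℕ) (S : Finset ℕ) (f : ℕ → ℤ) (h : S.card ≤ 1) :
    ‖(Nn : ℂ) * ∑ t ∈ S,
        Complex.exp (2 * (Real.pi : ℂ) * Complex.I * ((f t : ℤ) : ℂ) / (L : ℂ))‖
      ≤ (Nn : ℝ) := by
  rw [norm_mul, Complex.norm_natCast]
  have h1 : ‖∑ t ∈ S,
      Complex.exp (2 * (Real.pi : ℂ) * Complex.I * ((f t : ℤ) : ℂ) / (L : ℂ))‖ ≤ 1 := by
    calc ‖∑ t ∈ S,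
          Complex.exp (2 * (Real.pi : ℂ) * Complex.I * ((f t : ℤ) : ℂ) / (L : ℂ))‖
        ≤ ∑ t ∈ S, ‖
            (Complex.exp (2 * (Real.pi : ℂ) * Complex.I * ((f t : ℤ) : ℂ) / (L : ℂ)))‖ :=
          norm_sum_le _ _
      _ = ∑ t ∈ S, 1 := by
          exact Finset.sum_congr rfl fun t _ => phase_abs L (f t)
      _ = (S.card : ℝ) := by simp
      _ ≤ 1 := by exact_mod_cast h
  calc (Nn : ℝ) * ‖_‖ ≤ (Nn : ℝ) * 1 :=
        mul_le_mul_of_nonneg_left h1 (by positivity)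
    _ = (Nn : ℝ) := mul_one _

/-- Corollary, case i: with `K = min{p1 - 1, p^n}`,
`L = N1 (p^n - c)` and `N = N1 p^n` (`p1` the smallest prime factor of `N1`,
`1 ≤ c < p^n - 1`), the set of Construction 2 is an aperiodic
`(K, N1 p^n, N1 (p^n - c), N1 p^n, Π)`-DRCS set with `Π = (-L,L) × (-L,L)`:
all relevant AF magnitudes are at most `N1 p^n`. -/
theorem stmt12 (p n N1 c p1 r K L N : ℕ)
    (hp : p.Prime) (hn : 0 < n) (hN1 : 0 < N1) (hp1 : p1 = N1.minFac)
    (hc1 : 1 ≤ c) (hc2 : c < p ^ n - 1)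
    (hK : K = min (p1 - 1) (p ^ n)) (hL : L = N1 * (p ^ n - c))
    (hN : N = N1 * p ^ n)
    (A : ℕ → ℕ → ZMod N) (hA : IsGQFR N K L A)
    (b : ℕ → ℕ → ℤ) (hB : IsBH N r b) :
    (∀ k < K, ∀ τ ν : ℤ, |τ| < (L : ℤ) → |ν| < (L : ℤ) → (τ, ν) ≠ (0, 0) →
        ‖AFsum L N r A b k k τ ν‖ ≤ N1 * p ^ n) ∧
      (∀ k1 < K, ∀ k2 < K, k1 ≠ k2 → ∀ τ ν : ℤ, |τ| < (L : ℤ) → |ν| < (L : ℤ) →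
        ‖AFsum L N r A b k1 k2 τ ν‖ ≤ N1 * p ^ n) := by
  have hpn : 2 ≤ p ^ n := by
    calc 2 ≤ p := hp.two_le
    _ ≤ p ^ n := Nat.le_self_pow hn.ne' p
  have hLpos : 0 < L := by
    rw [hL]; exact Nat.mul_pos hN1 (by omega)
  have hNpos : 0 < N := by
    rw [hN]; exact Nat.mul_pos hN1 (by omega)
  have hNR : ((N : ℝ)) = (N1 : ℝ) * (p : ℝ) ^ n := by rw [hN]; push_cast; ring
  constructor
  · -- self AF
    intro k hk τ ν hτ hν hne0
    rcases le_or_gt 0 τ with hτ0 | hτ0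
    · rcases eq_or_ne τ 0 with h0 | h0
      · -- τ = 0, ν ≠ 0 : geometric sum vanishes
        subst h0
        have hν0 : ν ≠ 0 := by simpa using hne0
        rw [AFsum_pos hNpos hB A k k 0 ν le_rfl]
        have hf : (Finset.range (L - (0 : ℤ).toNat)).filter
            (fun t => A k t = A k (t + (0 : ℤ).toNat)) = Finset.range L := by
          simp
        rw [hf, geom_zero L ν hLpos hν0 hν]
        simp [hNR]
        positivity
      · -- τ > 0 : no matches
        have hσ : 1 ≤ τ.toNat := by omega
        rw [AFsum_pos hNpos hB A k k τ ν hτ0,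
          self_filter_empty hA hk hσ]
        simp [hNR]
        positivity
    · -- τ < 0 : no matches
      have hσ : 1 ≤ (-τ).toNat := by omega
      rw [AFsum_neg hNpos hB A k k τ ν (not_le.mpr hτ0)]
      have hf : (Finset.range (L - (-τ).toNat)).filter
          (fun t => A k (t + (-τ).toNat) = A k t)
          = (Finset.range (L - (-τ).toNat)).filter
            (fun t => A k t = A k (t + (-τ).toNat)) := by
        apply Finset.filter_congr
        intro t _
        exact eq_comm
      rw [hf, self_filter_empty hA hk hσ]
      simp [hNR]
      positivity
  · -- cross AF
    intro k1 hk1 k2 hk2 hne τ ν hτ hν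
    rw [← hNR] at *
    rcases le_or_gt 0 τ with hτ0 | hτ0
    · rw [AFsum_pos hNpos hB A k1 k2 τ ν hτ0]
      calc ‖_‖ ≤ (N : ℝ) :=
            abs_bound N L _ (fun t => ν * t)
              (cross_filter_card hA hk1 hk2 hne τ.toNat)
        _ ≤ (N : ℝ) := le_rfl
    · rw [AFsum_neg hNpos hB A k1 k2 τ ν (not_le.mpr hτ0)]
      have hf : (Finset.range (L - (-τ).toNat)).filter
          (fun t => A k1 (t + (-τ).toNat) = A k2 t)
          = (Finset.range (L - (-τ).toNat)).filter
            (fun t => A k2 t = A k1 (t + (-τ).toNat)) := by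
        apply Finset.filter_congr
        intro t _
        exact eq_comm
      rw [hf]
      exact abs_bound N L _ (fun t => ν * (t + (-τ).toNat))
        (cross_filter_card hA hk2 hk1 hne.symm (-τ).toNat)
end

section
/- Let p be a prime, n a positive integer, N1 a positive integer with smallest prime factor p1, and 1 ≤ c < p^n. Let A be a generalized quasi-Florentine rectangle of size K × L over Z_N with K = min{p1 − 1, p^n}, L = N1(p^n + 1 − c) and N = N1(p^n + 1), and let B be a Butson-type Hadamard matrix BH(N, r). Then the set C of Construction 2 is an aperiodic (K, N1(p^n + 1), N1(p^n + 1 − c), N1(p^n + 1), Π)-DRCS set with Π = (−N1(p^n + 1 − c), N1(p^n + 1 − c)) × (−N1(p^n + 1 − c), N1(p^n + 1 − c)); that is, θ̂_max(C) ≤ N1(p^n + 1). -/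
/- ### Auxiliary lemmas -/

/-- All the phase factors are unimodular. -/
lemma stmt13_abs_phase (x : ℤ) (L : ℕ) :
    ‖Complex.exp (2 * (Real.pi : ℂ) * Complex.I * ((x : ℤ) : ℂ) / (L : ℂ))‖ = 1 := by
  rw [Complex.norm_exp]
  have : (2 * (Real.pi : ℂ) * Complex.I * ((x : ℤ) : ℂ) / (L : ℂ)).re = 0 := by
    simp [Complex.div_re, Complex.mul_re, Complex.mul_im]
  rw [this, Real.exp_zero]

/-- Vanishing of the geometric sum of `L`-th roots of unity. -/
lemma stmt13_geo_sum (L : ℕ) (hL : 0 < L) (ν : ℤ) (hν : ν ≠ 0) (h : |ν| < (L : ℤ)) :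
    ∑ t ∈ Finset.range L,
      Complex.exp (2 * (Real.pi : ℂ) * Complex.I * ((ν * t : ℤ) : ℂ) / (L : ℂ)) = 0 := by
  set z : ℂ := Complex.exp (2 * (Real.pi : ℂ) * Complex.I * (ν : ℂ) / (L : ℂ)) with hz
  have hterm : ∀ t : ℕ, Complex.exp (2 * (Real.pi : ℂ) * Complex.I * ((ν * t : ℤ) : ℂ) / (L : ℂ))
      = z ^ t := by
    intro t
    rw [hz, ← Complex.exp_nat_mul]
    congr 1
    push_cast
    ring
  have hzL : z ^ L = 1 := by
    rw [hz, ← Complex.exp_nat_mul]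
    have hL0 : (L : ℂ) ≠ 0 := Nat.cast_ne_zero.mpr hL.ne'
    have : (L : ℂ) * (2 * (Real.pi : ℂ) * Complex.I * (ν : ℂ) / (L : ℂ))
        = ν * (2 * Real.pi * Complex.I) := by
      field_simp
    rw [this, Complex.exp_int_mul_two_pi_mul_I]
  have hz1 : z ≠ 1 := by
    intro h1
    rw [hz, Complex.exp_eq_one_iff] at h1
    obtain ⟨k, hk⟩ := h1
    have hL0 : (L : ℂ) ≠ 0 := Nat.cast_ne_zero.mpr hL.ne'
    have hπ : (2 * (Real.pi : ℂ) * Complex.I) ≠ 0 := by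
      simp [Real.pi_ne_zero, Complex.I_ne_zero]
    have : (ν : ℂ) = k * L := by
      field_simp at hk
      have h2 : (2 * (Real.pi : ℂ) * Complex.I) * (ν : ℂ)
          = (2 * (Real.pi : ℂ) * Complex.I) * ((k : ℂ) * L) := by
        linear_combination (2 * (Real.pi : ℂ) * Complex.I) * hk
      exact mul_left_cancel₀ hπ h2
    have hνk : ν = k * L := by exact_mod_cast this
    rcases eq_or_ne k 0 with rfl | hk0
    · simp at hνk; exact hν hνk
    · have : (L : ℤ) ≤ |ν| := by
        rw [hνk, abs_mul]
        have h1k : 1 ≤ |k| := Int.one_le_abs (by simpa using hk0)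
        calc (L : ℤ) = 1 * |(L : ℤ)| := by simp
          _ ≤ |k| * |(L : ℤ)| := mul_le_mul_of_nonneg_right h1k (abs_nonneg _)
      omega
  calc ∑ t ∈ Finset.range L,
        Complex.exp (2 * (Real.pi : ℂ) * Complex.I * ((ν * t : ℤ) : ℂ) / (L : ℂ))
      = ∑ t ∈ Finset.range L, z ^ t := by simp_rw [hterm]
    _ = (z ^ L - 1) / (z - 1) := geom_sum_eq hz1 L
    _ = 0 := by rw [hzL]; simp

/-- The inner sum over `m` collapses via the Butson property. -/
lemma stmt13_key (N r : ℕ) (hN : 0 < N) (A : ℕ → ℕ → ZMod N) (b : ℕ → ℕ → ℤ)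
    (hB : IsBH N r b) (k1 k2 u v : ℕ) :
    ∑ m ∈ Finset.range N, seqC N r A b k1 m u * (starRingEnd ℂ) (seqC N r A b k2 m v)
      = if A k1 u = A k2 v then (N : ℂ) else 0 := by
  haveI : NeZero N := ⟨hN.ne'⟩
  have step : ∀ m : ℕ, seqC N r A b k1 m u * (starRingEnd ℂ) (seqC N r A b k2 m v)
      = Complex.exp (2 * (Real.pi : ℂ) * Complex.I *
          ((b (A k1 u).val m - b (A k2 v).val m : ℤ) : ℂ) / (r : ℂ)) := by
    intro m
    simp only [seqC]
    rw [← Complex.exp_conj, ← Complex.exp_add]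
    congr 1
    have hconj : (starRingEnd ℂ)
          (2 * (Real.pi : ℂ) * Complex.I * ((b (A k2 v).val m : ℤ) : ℂ) / (r : ℂ))
        = -(2 * (Real.pi : ℂ) * Complex.I * ((b (A k2 v).val m : ℤ) : ℂ) / (r : ℂ)) := by
      simp [map_div₀, Complex.conj_I, map_ofNat]
      ring
    rw [hconj]
    push_cast
    ring
  simp_rw [step]
  rw [hB _ (ZMod.val_lt _) _ (ZMod.val_lt _)]
  exact if_congr ⟨fun h => ZMod.val_injective N h, fun h => congrArg ZMod.val h⟩ rfl rfl

/-- Rewriting `AFsum` for nonnegative delays. -/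
lemma stmt13_afsum_nonneg (L N r : ℕ) (hN : 0 < N) (A : ℕ → ℕ → ZMod N) (b : ℕ → ℕ → ℤ)
    (hB : IsBH N r b) (k1 k2 : ℕ) (τ ν : ℤ) (hτ : 0 ≤ τ) :
    AFsum L N r A b k1 k2 τ ν = (N : ℂ) *
      ∑ t ∈ (Finset.range (L - τ.toNat)).filter (fun t => A k1 t = A k2 (t + τ.toNat)),
        Complex.exp (2 * (Real.pi : ℂ) * Complex.I * ((ν * t : ℤ) : ℂ) / (L : ℂ)) := by
  have h1 : AFsum L N r A b k1 k2 τ ν = ∑ t ∈ Finset.range (L - τ.toNat),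
      (if A k1 t = A k2 (t + τ.toNat) then (N : ℂ) else 0) *
        Complex.exp (2 * (Real.pi : ℂ) * Complex.I * ((ν * t : ℤ) : ℂ) / (L : ℂ)) := by
    simp only [AFsum, apAF, if_pos hτ]
    rw [Finset.sum_comm]
    refine Finset.sum_congr rfl fun t _ => ?_
    rw [← Finset.sum_mul, stmt13_key N r hN A b hB]
  rw [h1, Finset.sum_filter, Finset.mul_sum]
  refine Finset.sum_congr rfl fun t _ => ?_
  split_ifs <;> simp

/-- Rewriting `AFsum` for negative delays. -/
lemma stmt13_afsum_neg (L N r : ℕ) (hN : 0 < N) (A : ℕ → ℕ → ZMod N) (b : ℕ → ℕ → ℤ)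
    (hB : IsBH N r b) (k1 k2 : ℕ) (τ ν : ℤ) (hτ : ¬ 0 ≤ τ) :
    AFsum L N r A b k1 k2 τ ν = (N : ℂ) *
      ∑ t ∈ (Finset.range (L - (-τ).toNat)).filter
          (fun t => A k1 (t + (-τ).toNat) = A k2 t),
        Complex.exp (2 * (Real.pi : ℂ) * Complex.I *
          ((ν * (t + (-τ).toNat) : ℤ) : ℂ) / (L : ℂ)) := by
  have h1 : AFsum L N r A b k1 k2 τ ν = ∑ t ∈ Finset.range (L - (-τ).toNat),
      (if A k1 (t + (-τ).toNat) = A k2 t then (N : ℂ) else 0) *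
        Complex.exp (2 * (Real.pi : ℂ) * Complex.I *
          ((ν * (t + (-τ).toNat) : ℤ) : ℂ) / (L : ℂ)) := by
    simp only [AFsum, apAF, if_neg hτ]
    rw [Finset.sum_comm]
    refine Finset.sum_congr rfl fun t _ => ?_
    rw [← Finset.sum_mul, stmt13_key N r hN A b hB]
  rw [h1, Finset.sum_filter, Finset.mul_sum]
  refine Finset.sum_congr rfl fun t _ => ?_
  split_ifs <;> simp

/-- At most one matching position (C1/C2 argument). -/
lemma stmt13_card_le (N K L : ℕ) (A : ℕ → ℕ → ZMod N) (hA : IsGQFR N K L A)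
    (k1 k2 : ℕ) (h1 : k1 < K) (h2 : k2 < K) (σ : ℕ) (h : k1 ≠ k2 ∨ 1 ≤ σ) :
    ((Finset.range (L - σ)).filter (fun t => A k1 t = A k2 (t + σ))).card ≤ 1 := by
  obtain ⟨hC1, hC2⟩ := hA
  rw [Finset.card_le_one]
  intro t1 ht1 t2 ht2
  simp only [Finset.mem_filter, Finset.mem_range] at ht1 ht2
  obtain ⟨hm1, he1⟩ := ht1
  obtain ⟨hm2, he2⟩ := ht2
  rcases eq_or_ne k1 k2 with rfl | hk
  · -- same row: the matching set is empty since σ ≥ 1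
    have hσ : 1 ≤ σ := h.resolve_left (fun hh => hh rfl)
    exfalso
    have := hC1 k1 h1 t1 (by omega) (t1 + σ) (by omega) he1
    omega
  · -- distinct rows: two matches would contradict (C2)
    have main : ∀ s1 s2 : ℕ, s1 < L - σ → s2 < L - σ →
        A k1 s1 = A k2 (s1 + σ) → A k1 s2 = A k2 (s2 + σ) → s1 < s2 → False := by
      intro s1 s2 hs1 hs2 hq1 hq2 hlt
      set m := s2 - s1 with hm
      have hab : A k1 s1 ≠ A k1 s2 := by
        intro hh
        have := hC1 k1 h1 s1 (by omega) s2 (by omega) hh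
        omega
      have hi : ∃ j, j + m < L ∧ A k1 j = A k1 s1 ∧ A k1 (j + m) = A k1 s2 :=
        ⟨s1, by omega, rfl, by rw [show s1 + m = s2 by omega]⟩
      have hp : ∃ j, j + m < L ∧ A k2 j = A k1 s1 ∧ A k2 (j + m) = A k1 s2 :=
        ⟨s1 + σ, by omega, hq1.symm, by
          rw [show s1 + σ + m = s2 + σ by omega]; exact hq2.symm⟩
      exact hk (hC2 (A k1 s1) (A k1 s2) hab m (by omega) (by omega) k1 h1 k2 h2 hi hp)
    rcases lt_trichotomy t1 t2 with hlt | heq | hgt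
    · exact absurd (main t1 t2 hm1 hm2 he1 he2 hlt) (fun x => x)
    · exact heq
    · exact absurd (main t2 t1 hm2 hm1 he2 he1 hgt) (fun x => x)

/-- Generic final bound `|N · Σ_{t ∈ S} phase(t)| ≤ N` when `|S| ≤ 1`. -/
lemma stmt13_bound (L N : ℕ) (S : Finset ℕ) (f : ℕ → ℤ) (hcard : S.card ≤ 1) :
    ‖(N : ℂ) *
        ∑ t ∈ S, Complex.exp (2 * (Real.pi : ℂ) * Complex.I * ((f t : ℤ) : ℂ) / (L : ℂ))‖
      ≤ N := by
  rw [norm_mul, Complex.norm_natCast]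
  calc (N : ℝ) * ‖∑ t ∈ S,
          Complex.exp (2 * (Real.pi : ℂ) * Complex.I * ((f t : ℤ) : ℂ) / (L : ℂ))‖
      ≤ (N : ℝ) * ∑ t ∈ S, ‖
          (Complex.exp (2 * (Real.pi : ℂ) * Complex.I * ((f t : ℤ) : ℂ) / (L : ℂ)))‖ := by
        apply mul_le_mul_of_nonneg_left _ (Nat.cast_nonneg N)
        exact norm_sum_le _ _
    _ = (N : ℝ) * S.card := by
        congr 1
        rw [Finset.sum_congr rfl fun t _ => stmt13_abs_phase (f t) L]
        simp
    _ ≤ (N : ℝ) * 1 := by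
        apply mul_le_mul_of_nonneg_left _ (Nat.cast_nonneg N)
        exact_mod_cast hcard
    _ = N := mul_one _

/-- Corollary, case ii: with `K = min{p1 - 1, p^n}`,
`L = N1 (p^n + 1 - c)` and `N = N1 (p^n + 1)` (`p1` the smallest prime factor
of `N1`, `1 ≤ c < p^n`), the set of Construction 2 is an aperiodic
`(K, N1 (p^n + 1), N1 (p^n + 1 - c), N1 (p^n + 1), Π)`-DRCS set with
`Π = (-L,L) × (-L,L)`: all relevant AF magnitudes are at most `N1 (p^n + 1)`. -/
theorem stmt13 (p n N1 c p1 r K L N : ℕ)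
    (hp : p.Prime) (hn : 0 < n) (hN1 : 0 < N1) (hp1 : p1 = N1.minFac)
    (hc1 : 1 ≤ c) (hc2 : c < p ^ n)
    (hK : K = min (p1 - 1) (p ^ n)) (hL : L = N1 * (p ^ n + 1 - c))
    (hN : N = N1 * (p ^ n + 1))
    (A : ℕ → ℕ → ZMod N) (hA : IsGQFR N K L A)
    (b : ℕ → ℕ → ℤ) (hB : IsBH N r b) :
    (∀ k < K, ∀ τ ν : ℤ, |τ| < (L : ℤ) → |ν| < (L : ℤ) → (τ, ν) ≠ (0, 0) →
        ‖AFsum L N r A b k k τ ν‖ ≤ N1 * (p ^ n + 1)) ∧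
      (∀ k1 < K, ∀ k2 < K, k1 ≠ k2 → ∀ τ ν : ℤ, |τ| < (L : ℤ) → |ν| < (L : ℤ) →
        ‖AFsum L N r A b k1 k2 τ ν‖ ≤ N1 * (p ^ n + 1)) := by
  have hP : 1 ≤ p ^ n := Nat.one_le_pow _ _ hp.pos
  have hL0 : 0 < L := by rw [hL]; exact Nat.mul_pos hN1 (by omega)
  have hN0 : 0 < N := by rw [hN]; exact Nat.mul_pos hN1 (by omega)
  have hNR : (N : ℝ) = (N1 : ℝ) * ((p : ℝ) ^ n + 1) := by rw [hN]; push_cast; ring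
  constructor
  · -- autocorrelation case
    intro k hk τ ν hτ hν hne
    rw [← hNR]
    rcases eq_or_ne τ 0 with rfl | hτ0
    · -- τ = 0 : geometric sum vanishes
      have hν0 : ν ≠ 0 := by
        intro hh; exact hne (by rw [hh])
      rw [stmt13_afsum_nonneg L N r hN0 A b hB k k 0 ν le_rfl]
      have hfilter : (Finset.range (L - (0 : ℤ).toNat)).filter
          (fun t => A k t = A k (t + (0 : ℤ).toNat)) = Finset.range L := by
        simp
      rw [hfilter, stmt13_geo_sum L hL0 ν hν0 hν]
      simp
    · -- τ ≠ 0 : at most one (in fact zero) match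
      rcases le_or_gt 0 τ with hτp | hτn
      · rw [stmt13_afsum_nonneg L N r hN0 A b hB k k τ ν hτp]
        exact stmt13_bound L N _ _
          (stmt13_card_le N K L A hA k k hk hk τ.toNat (Or.inr (by omega)))
      · rw [stmt13_afsum_neg L N r hN0 A b hB k k τ ν (not_le.mpr hτn)]
        have hcard : ((Finset.range (L - (-τ).toNat)).filter
            (fun t => A k (t + (-τ).toNat) = A k t)).card ≤ 1 := by
          have := stmt13_card_le N K L A hA k k hk hk (-τ).toNat (Or.inr (by omega))
          convert this using 2
          ext t
          simp [eq_comm]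
        exact stmt13_bound L N _ _ hcard
  · -- cross-correlation case
    intro k1 hk1 k2 hk2 hk12 τ ν hτ hν
    rw [← hNR]
    rcases le_or_gt 0 τ with hτp | hτn
    · rw [stmt13_afsum_nonneg L N r hN0 A b hB k1 k2 τ ν hτp]
      exact stmt13_bound L N _ _
        (stmt13_card_le N K L A hA k1 k2 hk1 hk2 τ.toNat (Or.inl hk12))
    · rw [stmt13_afsum_neg L N r hN0 A b hB k1 k2 τ ν (not_le.mpr hτn)]
      have hcard : ((Finset.range (L - (-τ).toNat)).filter
          (fun t => A k1 (t + (-τ).toNat) = A k2 t)).card ≤ 1 := by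
        have := stmt13_card_le N K L A hA k2 k1 hk2 hk1 (-τ).toNat (Or.inl hk12.symm)
        convert this using 2
        ext t
        simp [eq_comm]
      exact stmt13_bound L N _ _ hcard
end
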